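/- Let 𝓗 be a connected hypergraph on H equipped with a total order on H. Then the reflexive–transitive closure →* of the flip relation → on the constructions of 𝓗 is antisymmetric, hence a partial order; moreover the flip relation → is well-founded. -/

import Mathlib

open scoped Classical

noncomputable section

/-! ## Hypergraphs (nestohedra combinatorics), after Curien–Laplante-Anfossi:
hypergraphs, restrictions, connectivity, saturation, reconnected restriction,
constructs/constructions, the face order, the flip rewriting, and terms over the
associated signatures. -/

/-- A hypergraph on a finite vertex set: a finite set of nonempty hyperedges whose union is
the vertex set, assumed atomic (every singleton is a hyperedge). -/
structure FinHypergraph (α : Type*) [DecidableEq α] where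
  verts : Finset α
  edges : Finset (Finset α)
  edges_nonempty : ∀ e ∈ edges, e.Nonempty
  edges_subset : ∀ e ∈ edges, e ⊆ verts
  atomic : ∀ v ∈ verts, {v} ∈ edges

namespace FinHypergraph

variable {α : Type*} [DecidableEq α]

/-- The plain restriction `𝓗_X` of a hypergraph to a subset `X` of its vertices. -/
def restrict (H : FinHypergraph α) (X : Finset α) : FinHypergraph α where
  verts := X ∩ H.verts
  edges := H.edges.filter (· ⊆ X)
  edges_nonempty e he := H.edges_nonempty e (Finset.mem_filter.mp he).1
  edges_subset e he :=
    Finset.subset_inter (Finset.mem_filter.mp he).2 (H.edges_subset e (Finset.mem_filter.mp he).1)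
  atomic v hv := by
    rcases Finset.mem_inter.mp hv with ⟨h1, h2⟩
    exact Finset.mem_filter.mpr ⟨H.atomic v h2, Finset.singleton_subset_iff.mpr h1⟩

/-- A hypergraph is connected if its vertex set is nonempty and admits no nontrivial
partition `X₁ ∪ X₂` such that every edge lies in `X₁` or in `X₂`. -/
def Connected (H : FinHypergraph α) : Prop :=
  H.verts.Nonempty ∧ ∀ X₁ X₂ : Finset α, X₁.Nonempty → X₂.Nonempty →
    Disjoint X₁ X₂ → X₁ ∪ X₂ = H.verts → ∃ e ∈ H.edges, ¬e ⊆ X₁ ∧ ¬e ⊆ X₂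

/-- `C` is (the vertex set of) a connected component of `H`: a maximal connected subset. -/
def IsComponent (H : FinHypergraph α) (C : Finset α) : Prop :=
  C ⊆ H.verts ∧ (H.restrict C).Connected ∧
    ∀ D : Finset α, C ⊆ D → D ⊆ H.verts → (H.restrict D).Connected → D = C

/-- `y` and `z` lie in the same connected component of `H`. -/
def SameComponent (H : FinHypergraph α) (y z : α) : Prop :=
  ∃ C : Finset α, H.IsComponent C ∧ y ∈ C ∧ z ∈ C

/-- The saturation `Sat(𝓗)`: the set of (nonempty) connected subsets of vertices. -/
def sat (H : FinHypergraph α) : Finset (Finset α) :=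
  H.verts.powerset.filter fun X => (H.restrict X).Connected

theorem singleton_connected (H : FinHypergraph α) {v : α} (hv : v ∈ H.verts) :
    (H.restrict {v}).Connected := by
  constructor
  · exact ⟨v, Finset.mem_inter.mpr ⟨Finset.mem_singleton_self v, hv⟩⟩
  · intro X₁ X₂ h₁ h₂ hd hu
    exfalso
    have hv' : ({v} : Finset α) ∩ H.verts = {v} :=
      Finset.inter_eq_left.mpr (Finset.singleton_subset_iff.mpr hv)
    have hu' : X₁ ∪ X₂ = ({v} : Finset α) := hu.trans hv'
    have hX₁ : X₁ ⊆ {v} := hu' ▸ Finset.subset_union_left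
    have hX₂ : X₂ ⊆ {v} := hu' ▸ Finset.subset_union_right
    obtain ⟨a, ha⟩ := h₁
    obtain ⟨b, hb⟩ := h₂
    have ha' := Finset.mem_singleton.mp (hX₁ ha)
    have hb' := Finset.mem_singleton.mp (hX₂ hb)
    subst ha'; exact Finset.disjoint_left.mp hd ha (hb' ▸ hb)

/-- The reconnected restriction `𝓗 ↾ X` of `𝓗` to `X`. -/
def reconRestrict (H : FinHypergraph α) (X : Finset α) : FinHypergraph α where
  verts := X ∩ H.verts
  edges := (H.sat.image (· ∩ X)).filter (·.Nonempty)
  edges_nonempty e he := (Finset.mem_filter.mp he).2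
  edges_subset := by
    intro e he
    rcases Finset.mem_image.mp (Finset.mem_filter.mp he).1 with ⟨Z, hZ, rfl⟩
    have hZv : Z ⊆ H.verts := Finset.mem_powerset.mp (Finset.mem_filter.mp hZ).1
    exact fun a ha => Finset.mem_inter.mpr
      ⟨(Finset.mem_inter.mp ha).2, hZv (Finset.mem_inter.mp ha).1⟩
  atomic := by
    intro v hv
    rcases Finset.mem_inter.mp hv with ⟨h1, h2⟩
    refine Finset.mem_filter.mpr ⟨Finset.mem_image.mpr ⟨{v}, ?_, ?_⟩, ?_⟩
    · exact Finset.mem_filter.mpr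
        ⟨Finset.mem_powerset.mpr (Finset.singleton_subset_iff.mpr h2),
         H.singleton_connected h2⟩
    · exact Finset.inter_eq_left.mpr (Finset.singleton_subset_iff.mpr h1)
    · exact ⟨v, by simp [Finset.inter_eq_left.mpr (Finset.singleton_subset_iff.mpr h1)]⟩

/-- `x ⇝ {y,z}` in `𝓗`: after removing `x`, the vertices `y` and `z` lie in the same
connected component.  Its negation is "`x` disconnects `y` and `z` in `𝓗`". -/
def Links (H : FinHypergraph α) (x y z : α) : Prop :=
  (H.restrict (H.verts \ {x})).SameComponent y z

/-- A hypergraph is contextual if for every connected subset `Y` of cardinality at least 3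
and all distinct `x, y, z ∈ Y`, `x` disconnects `y` and `z` in `𝓗_Y` iff it does in `𝓗`. -/
def Contextual (H : FinHypergraph α) : Prop :=
  ∀ Y : Finset α, Y ⊆ H.verts → (H.restrict Y).Connected → 3 ≤ Y.card →
    ∀ x y z : α, x ∈ Y → y ∈ Y → z ∈ Y → x ≠ y → y ≠ z → x ≠ z →
      ((H.restrict Y).Links x y z ↔ H.Links x y z)

end FinHypergraph

/-- Finite rooted trees with nodes decorated by finite sets (potential constructs). -/
inductive FTree (α : Type*) : Type _ where
  | node : Finset α → List (FTree α) → FTree α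

namespace FTree

variable {α : Type*} [DecidableEq α]

/-- The decoration of the root node. -/
def label : FTree α → Finset α
  | node Y _ => Y

/-- The list of children of the root node. -/
def children : FTree α → List (FTree α)
  | node _ ts => ts

/-- The support of a tree: the union of the decorations of its nodes. -/
def support : FTree α → Finset α
  | node Y [] => Y
  | node Y (t :: ts) => support t ∪ support (node Y ts)

/-- The list of decorations of the nodes of a tree. -/
def labels : FTree α → List (Finset α)
  | node Y [] => [Y]
  | node Y (t :: ts) => labels t ++ labels (node Y ts)

/-- The dimension of a construct: the sum over its nodes `X` of `|X| - 1`. -/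
def dim (T : FTree α) : ℕ := (T.labels.map fun X => X.card - 1).sum

mutual
  /-- The (full) subtree rooted at the node decorated by `X`, if any. -/
  def subtreeAt : FTree α → Finset α → Option (FTree α)
    | node Y ts, X => if Y = X then some (node Y ts) else subtreeAtList ts X
  def subtreeAtList : List (FTree α) → Finset α → Option (FTree α)
    | [], _ => none
    | t :: ts, X => (subtreeAt t X).elim (subtreeAtList ts X) some
end

/-- The support `supp (T ↾ X)` of the subtree rooted at the node decorated by `X`
(or `∅` if there is no such node). -/
def suppAt (T : FTree α) (X : Finset α) : Finset α :=
  ((T.subtreeAt X).map support).getD ∅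

mutual
  /-- The list of supports of the subtrees rooted at the nodes of `T` (its nested set). -/
  def nests : FTree α → List (Finset α)
    | node Y ts => support (node Y ts) :: nestsList ts
  def nestsList : List (FTree α) → List (Finset α)
    | [] => []
    | t :: ts => nests t ++ nestsList ts
end

/-- The nested set of a tree, as a finite set. -/
def nestSet (T : FTree α) : Finset (Finset α) := T.nests.toFinset

/-- `S ≺ T` (`S` is covered by `T`) in the face order: `T` is obtained from `S` by
contracting one edge between a node and its father (equivalently, the nested set of `T`
is obtained from that of `S` by removing one non-root element). -/
def CoveredBy (S T : FTree α) : Prop :=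
  ∃ N ∈ S.nests, N ≠ S.support ∧ T.nestSet = S.nestSet.erase N

/-- The face (subface) order `S ≼ T` on constructs: the reflexive–transitive closure of
the covering relation `≺`. -/
def FaceLe (S T : FTree α) : Prop := Relation.ReflTransGen CoveredBy S T

/-- `IsSubtree S T`: `S` is a (full) subtree of `T`. -/
inductive IsSubtree : FTree α → FTree α → Prop
  | refl (t : FTree α) : IsSubtree t t
  | child {s t u : FTree α} : IsSubtree s t → t ∈ u.children → IsSubtree s u

/-- In `T`, the node decorated by `X` has a child decorated by `Y`. -/
def ParentChild (X Y : Finset α) (T : FTree α) : Prop :=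
  ∃ R : FTree α, IsSubtree R T ∧ R.label = X ∧ ∃ t ∈ R.children, t.label = Y

mutual
  /-- Pruning: remove all (subtrees rooted at) nodes whose decoration is not a subset
  of `X`, keeping the root. -/
  def prune (X : Finset α) : FTree α → FTree α
    | node Y ts => node Y (pruneList X ts)
  def pruneList (X : Finset α) : List (FTree α) → List (FTree α)
    | [] => []
    | t :: ts => if t.label ⊆ X then prune X t :: pruneList X ts else pruneList X ts
end

end FTree

/-- `IsConstruct H T`: the tree `T` is a construct of the hypergraph `H`: its root `Y` is a
nonempty subset of the vertices, its children are constructs of the connected components of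
`𝓗 ∖ Y` (one for each component, listed by increasing maximal vertex). -/
inductive IsConstruct {α : Type*} [LinearOrder α] : FinHypergraph α → FTree α → Prop
  | node {H : FinHypergraph α} (Y : Finset α) (ts : List (FTree α))
      (hY : Y.Nonempty) (hYsub : Y ⊆ H.verts)
      (hmem : ∀ t ∈ ts, (H.restrict (H.verts \ Y)).IsComponent t.support)
      (hcover : ∀ C : Finset α, (H.restrict (H.verts \ Y)).IsComponent C →
        ∃ t ∈ ts, t.support = C)
      (hsorted : ts.Pairwise fun a b => a.support.max < b.support.max)
      (hchild : ∀ t ∈ ts, IsConstruct (H.restrict t.support) t) :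
      IsConstruct H (FTree.node Y ts)

section ConstructionOrder

variable {α : Type*} [LinearOrder α]

/-- A construction: a construct all of whose nodes are singletons (a vertex of the
nestohedron). -/
def IsConstruction (H : FinHypergraph α) (T : FTree α) : Prop :=
  IsConstruct H T ∧ ∀ X ∈ T.labels, X.card = 1

/-- An `X`-face: a 2-dimensional construct whose unique non-singleton node is decorated
by `X`, of cardinality 3. -/
def IsXFace (H : FinHypergraph α) (X : Finset α) (T : FTree α) : Prop :=
  IsConstruct H T ∧ X.card = 3 ∧ X ∈ T.labels ∧ ∀ Y ∈ T.labels, Y ≠ X → Y.card = 1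

/-- Two distinct constructions are joined by an edge of the nestohedron: both are covered
by a common 1-dimensional construct. -/
def EdgeJoined (H : FinHypergraph α) (S T : FTree α) : Prop :=
  IsConstruction H S ∧ IsConstruction H T ∧ S ≠ T ∧
  ∃ V : FTree α, IsConstruct H V ∧ V.dim = 1 ∧ FTree.CoveredBy S V ∧ FTree.CoveredBy T V

/-- The flip rewriting relation `S → T` on constructions of an ordered hypergraph:
`S` and `T` are the two endpoints of an edge whose 1-dimensional face has unique
non-singleton node `{x, y}` with `x < y`, and in `S` the node `{x}` is the parent of the
node `{y}`. -/
def Flip (H : FinHypergraph α) (S T : FTree α) : Prop :=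
  IsConstruction H S ∧ IsConstruction H T ∧ S ≠ T ∧
  ∃ (V : FTree α) (x y : α), IsConstruct H V ∧ V.dim = 1 ∧ x ≠ y ∧
    ({x, y} : Finset α) ∈ V.labels ∧ FTree.CoveredBy S V ∧ FTree.CoveredBy T V ∧
    FTree.ParentChild ({x} : Finset α) ({y} : Finset α) S ∧ x < y

/-- The coordinate vector of a construction `S` of `H`:
`v^S_x = |{e ∈ Sat(𝓗) : x ∈ e ⊆ supp (S ↾ x)}|`. -/
def coordVec (H : FinHypergraph α) (S : FTree α) (x : α) : ℕ :=
  (H.sat.filter fun e => x ∈ e ∧ e ⊆ S.suppAt {x}).card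

end ConstructionOrder

/-- Raw terms over the signature `Σ_𝓗` (and `Σ^c_𝓗`): variables are (connected) subsets,
function symbols are pairs `(X, Y)` of subsets, applied to a list of arguments. -/
inductive HTerm (α : Type*) : Type _ where
  | var : Finset α → HTerm α
  | app : Finset α → Finset α → List (HTerm α) → HTerm α

namespace HTerm

variable {α : Type*} [DecidableEq α]

/-- The (output) sort of a term. -/
def sortOf : HTerm α → Finset α
  | var A => A
  | app _ Y _ => Y

/-- The list of variables occurring in a term. -/
def varsList : HTerm α → List (Finset α)
  | var A => [A]
  | app _ _ [] => []
  | app X Y (t :: ts) => varsList t ++ varsList (app X Y ts)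

/-- The list of first components of the function symbols occurring in a term. -/
def appFirsts : HTerm α → List (Finset α)
  | var _ => []
  | app X _ [] => [X]
  | app X Y (t :: ts) => appFirsts t ++ appFirsts (app X Y ts)

/-- A term is closed if it contains no variables. -/
def Closed (t : HTerm α) : Prop := t.varsList = []

/-- The union `⋃ var(t)` of the variables of a term. -/
def varsUnion (t : HTerm α) : Finset α := t.varsList.foldr (· ∪ ·) ∅

mutual
  /-- Projection of a term to a decorated tree: every function symbol `(X, Y)` is sent to
  its first component `X`, and all variables are pruned. -/
  def toTree : HTerm α → FTree α
    | .var A => .node A []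
    | .app X _ ts => .node X (toTreeList ts)
  def toTreeList : List (HTerm α) → List (FTree α)
    | [] => []
    | .var _ :: ts => toTreeList ts
    | t :: ts => toTree t :: toTreeList ts
end

end HTerm

/-- Well-formed terms over the signature `Σ_𝓗` associated with the hypergraph `H`:
a variable is a connected subset (its own sort); a function symbol `(X, Y)` (with
`∅ ≠ X ⊆ Y ⊆ H` and `Y` connected) is applied to arguments whose sorts are exactly the
connected components of `𝓗_Y ∖ X`, listed by increasing maximal vertex. -/
inductive IsTerm {α : Type*} [LinearOrder α] (H : FinHypergraph α) : HTerm α → Prop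
  | var (A : Finset α) : A ⊆ H.verts → (H.restrict A).Connected → IsTerm H (.var A)
  | app (X Y : Finset α) (ts : List (HTerm α)) :
      X.Nonempty → X ⊆ Y → Y ⊆ H.verts → (H.restrict Y).Connected →
      (∀ t ∈ ts, (H.restrict (Y \ X)).IsComponent t.sortOf) →
      (∀ C : Finset α, (H.restrict (Y \ X)).IsComponent C → ∃ t ∈ ts, t.sortOf = C) →
      ts.Pairwise (fun a b => a.sortOf.max < b.sortOf.max) →
      (∀ t ∈ ts, IsTerm H t) →
      IsTerm H (.app X Y ts)

/-! A flip `S → T` across an edge whose 1-dimensional face has the node `{x, y}`, `x < y`,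
decreases the coordinate vector lexicographically along the order of the vertices. Let `K` be
the least nest of that face containing `x` and `y`. In `S` the node `{x}` is the parent of `{y}`,
so `supp (S ↾ x) = K`; in `T` the extra nest is `supp (T ↾ x)`, a nest inside `K` that misses
`y`, so `K` is counted in `v^S_x` but not in `v^T_x`. For every other vertex `w` the least
nest containing `w` is a nest of the common face, so `v^S_w = v^T_w`. The lexicographic order
on `ℕ^H` is well-founded, which gives both claims. That the two sides of an edge differ enters
through the fact that a construct is determined by its nested set. -/

theorem List.eq_of_map_eq {β γ : Type*} {f : β → γ} :
    ∀ {l₁ l₂ : List β}, l₁.map f = l₂.map f → (∀ a ∈ l₁, ∀ b ∈ l₂, f a = f b → a = b) → l₁ = l₂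
  | [], [], _, _ => rfl
  | a :: l₁, b :: l₂, h, hf => by
    obtain ⟨hab, hl⟩ := List.cons_eq_cons.1 h
    rw [hf a List.mem_cons_self b List.mem_cons_self hab,
      List.eq_of_map_eq hl fun a ha b hb => hf a (List.mem_cons_of_mem _ ha) b
        (List.mem_cons_of_mem _ hb)]

namespace FinHypergraph

variable {α : Type*} [DecidableEq α] {G : FinHypergraph α} {A B C D : Finset α}

theorem restrict_verts_of_subset (hA : A ⊆ G.verts) : (G.restrict A).verts = A :=
  Finset.inter_eq_left.2 hA

theorem restrict_restrict (hBA : B ⊆ A) : (G.restrict A).restrict B = G.restrict B := by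
  have hB : B ∩ (A ∩ G.verts) = B ∩ G.verts := by
    rw [← Finset.inter_assoc, Finset.inter_eq_left.2 hBA]
  have hE : (G.edges.filter (· ⊆ A)).filter (· ⊆ B) = G.edges.filter (· ⊆ B) := by
    rw [Finset.filter_filter]
    exact Finset.filter_congr fun e _ => ⟨And.right, fun h => ⟨h.trans hBA, h⟩⟩
  simp only [restrict, hB, hE]

theorem restrict_self : G.restrict G.verts = G := by
  obtain ⟨V, E, -, hsub, -⟩ := G
  simp only [restrict, Finset.inter_self, mk.injEq, true_and]
  exact Finset.filter_true_of_mem hsub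

theorem Connected.subset_of_mem {X₁ X₂ : Finset α} (hA : A ⊆ G.verts)
    (hc : (G.restrict A).Connected) (hd : Disjoint X₁ X₂) (hsub : A ⊆ X₁ ∪ X₂)
    (hno : ∀ e ∈ G.edges, e ⊆ A → e ⊆ X₁ ∨ e ⊆ X₂) {v : α} (hvA : v ∈ A) (hv : v ∈ X₁) :
    A ⊆ X₁ := by
  by_contra hA₁
  obtain ⟨a, haA, haX₁⟩ := Finset.not_subset.1 hA₁
  have haX₂ : a ∈ X₂ := (Finset.mem_union.1 (hsub haA)).resolve_left haX₁
  obtain ⟨e, he, he₁, he₂⟩ := hc.2 (A ∩ X₁) (A ∩ X₂) ⟨v, Finset.mem_inter.2 ⟨hvA, hv⟩⟩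
    ⟨a, Finset.mem_inter.2 ⟨haA, haX₂⟩⟩
    (hd.mono Finset.inter_subset_right Finset.inter_subset_right)
    (by rw [← Finset.inter_union_distrib_left, Finset.inter_eq_left.2 hsub,
      restrict_verts_of_subset hA])
  obtain ⟨heG, heA⟩ := Finset.mem_filter.1 he
  rcases hno e heG heA with h | h
  exacts [he₁ (Finset.subset_inter heA h), he₂ (Finset.subset_inter heA h)]

theorem connected_union (hA : A ⊆ G.verts) (hB : B ⊆ G.verts) (hcA : (G.restrict A).Connected)
    (hcB : (G.restrict B).Connected) (hAB : (A ∩ B).Nonempty) :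
    (G.restrict (A ∪ B)).Connected := by
  have hverts : (G.restrict (A ∪ B)).verts = A ∪ B :=
    restrict_verts_of_subset (Finset.union_subset hA hB)
  obtain ⟨v, hv⟩ := hAB
  obtain ⟨hvA, hvB⟩ := Finset.mem_inter.1 hv
  refine ⟨⟨v, hverts.symm ▸ Finset.mem_union_left B hvA⟩, fun X₁ X₂ h₁ h₂ hd hu => ?_⟩
  rw [hverts] at hu
  by_contra! hno
  have hno' : ∀ e ∈ G.edges, e ⊆ A ∪ B → e ⊆ X₁ ∨ e ⊆ X₂ := fun e he heAB =>
    or_iff_not_imp_left.2 (hno e (Finset.mem_filter.2 ⟨he, heAB⟩))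
  have hsub : A ∪ B ⊆ X₁ ∪ X₂ := hu.ge
  -- the side of `v` contains `A ∪ B`, which leaves the other side empty
  have key : ∀ {Y₁ Y₂ : Finset α}, Disjoint Y₁ Y₂ → A ∪ B ⊆ Y₁ ∪ Y₂ →
      (∀ e ∈ G.edges, e ⊆ A ∪ B → e ⊆ Y₁ ∨ e ⊆ Y₂) → Y₂ ⊆ A ∪ B → v ∈ Y₁ → ¬Y₂.Nonempty := by
    intro Y₁ Y₂ hd hsub hno hY₂ hvY₁ ⟨w, hw⟩
    have hsub₁ : A ∪ B ⊆ Y₁ := Finset.union_subset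
      (Connected.subset_of_mem hA hcA hd (Finset.subset_union_left.trans hsub)
        (fun e he heA => hno e he (heA.trans Finset.subset_union_left)) hvA hvY₁)
      (Connected.subset_of_mem hB hcB hd (Finset.subset_union_right.trans hsub)
        (fun e he heB => hno e he (heB.trans Finset.subset_union_right)) hvB hvY₁)
    exact Finset.disjoint_left.1 hd (hsub₁ (hY₂ hw)) hw
  rcases Finset.mem_union.1 (hsub (Finset.mem_union_left _ hvA)) with hv₁ | hv₂
  · exact key hd hsub hno' (hu ▸ Finset.subset_union_right) hv₁ h₂
  · exact key hd.symm (Finset.union_comm X₁ X₂ ▸ hsub)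
      (fun e he heAB => (hno' e he heAB).symm) (hu ▸ Finset.subset_union_left) hv₂ h₁

theorem IsComponent.eq_of_mem (hC : G.IsComponent C) (hD : G.IsComponent D) {v : α}
    (hvC : v ∈ C) (hvD : v ∈ D) : C = D := by
  have hu := connected_union hC.1 hD.1 hC.2.1 hD.2.1 ⟨v, Finset.mem_inter.2 ⟨hvC, hvD⟩⟩
  have hCD := Finset.union_subset hC.1 hD.1
  rw [← hC.2.2 _ Finset.subset_union_left hCD hu, hD.2.2 _ Finset.subset_union_right hCD hu]

theorem exists_isComponent {v : α} (hv : v ∈ G.verts) : ∃ C, G.IsComponent C ∧ v ∈ C := by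
  set 𝒞 := G.verts.powerset.filter fun C => v ∈ C ∧ (G.restrict C).Connected
  have h𝒞 : 𝒞.Nonempty := ⟨{v}, Finset.mem_filter.2 ⟨Finset.mem_powerset.2
    (Finset.singleton_subset_iff.2 hv), Finset.mem_singleton_self v, G.singleton_connected hv⟩⟩
  obtain ⟨C, hC, hmax⟩ := 𝒞.exists_max_image Finset.card h𝒞
  obtain ⟨hCv, hvC, hCc⟩ := Finset.mem_filter.1 hC
  refine ⟨C, ⟨Finset.mem_powerset.1 hCv, hCc, fun D hCD hDv hDc => ?_⟩, hvC⟩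
  exact (Finset.eq_of_subset_of_card_le hCD
    (hmax D (Finset.mem_filter.2 ⟨Finset.mem_powerset.2 hDv, hCD hvC, hDc⟩))).symm

end FinHypergraph

namespace FTree

variable {α : Type*}

@[elab_as_elim]
theorem induction {P : FTree α → Prop}
    (node : ∀ Y ts, (∀ t ∈ ts, P t) → P (node Y ts)) : ∀ T, P T
  | .node Y ts => node Y ts fun t _ => induction node t

theorem isSubtree_node_iff {R : FTree α} {Y : Finset α} {ts : List (FTree α)} :
    IsSubtree R (node Y ts) ↔ R = node Y ts ∨ ∃ t ∈ ts, IsSubtree R t := by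
  constructor
  · rintro (_ | ⟨hR, ht⟩)
    exacts [Or.inl rfl, Or.inr ⟨_, ht, hR⟩]
  · rintro (rfl | ⟨t, ht, hR⟩)
    exacts [.refl _, .child hR ht]

theorem exists_isSubtree_node_iff {p : FTree α → Prop} {Y : Finset α} {ts : List (FTree α)} :
    (∃ R, IsSubtree R (node Y ts) ∧ p R) ↔ p (node Y ts) ∨ ∃ t ∈ ts, ∃ R, IsSubtree R t ∧ p R := by
  simp only [isSubtree_node_iff, or_and_right, exists_or, exists_eq_left]
  exact or_congr Iff.rfl ⟨fun ⟨R, ⟨t, ht, hR⟩, hp⟩ => ⟨t, ht, R, hR, hp⟩,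
    fun ⟨t, ht, R, hR, hp⟩ => ⟨R, ⟨t, ht, hR⟩, hp⟩⟩

theorem IsSubtree.trans {R S T : FTree α} (hRS : IsSubtree R S) (hST : IsSubtree S T) :
    IsSubtree R T := by
  induction hST with
  | refl => exact hRS
  | child _ ht ih => exact .child ih ht

variable [DecidableEq α]

theorem mem_support_node {a : α} {Y : Finset α} {ts : List (FTree α)} :
    a ∈ (node Y ts).support ↔ a ∈ Y ∨ ∃ t ∈ ts, a ∈ t.support := by
  induction ts with
  | nil => simp [support]
  | cons t ts ih =>
    simp only [support, Finset.mem_union, ih, List.mem_cons, exists_eq_or_imp]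
    tauto

theorem mem_labels_node {L : Finset α} {Y : Finset α} {ts : List (FTree α)} :
    L ∈ (node Y ts).labels ↔ L = Y ∨ ∃ t ∈ ts, L ∈ t.labels := by
  induction ts with
  | nil => simp [labels]
  | cons t ts ih =>
    simp only [labels, List.mem_append, ih, List.mem_cons, exists_eq_or_imp]
    tauto

theorem mem_nests_node {A : Finset α} {Y : Finset α} {ts : List (FTree α)} :
    A ∈ (node Y ts).nests ↔ A = (node Y ts).support ∨ ∃ t ∈ ts, A ∈ t.nests := by
  suffices ∀ ts : List (FTree α), A ∈ nestsList ts ↔ ∃ t ∈ ts, A ∈ t.nests by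
    simp [nests, this]
  intro ts
  induction ts with
  | nil => simp [nestsList]
  | cons t ts ih => simp [nestsList, ih]

theorem label_subset_support (T : FTree α) : T.label ⊆ T.support := by
  obtain ⟨Y, ts⟩ := T
  exact fun a ha => mem_support_node.2 (Or.inl ha)

theorem IsSubtree.support_subset {R T : FTree α} (h : IsSubtree R T) : R.support ⊆ T.support := by
  induction h with
  | refl => rfl
  | @child t u _ ht ih =>
    obtain ⟨Y, ts⟩ := u
    exact ih.trans fun a ha => mem_support_node.2 (Or.inr ⟨t, ht, ha⟩)

theorem mem_nestSet_iff {A : Finset α} {T : FTree α} :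
    A ∈ T.nestSet ↔ ∃ R, IsSubtree R T ∧ R.support = A := by
  rw [nestSet, List.mem_toFinset]
  induction T using FTree.induction with
  | node Y ts ih =>
    rw [mem_nests_node, exists_isSubtree_node_iff, eq_comm]
    exact or_congr Iff.rfl (exists_congr fun t => and_congr_right fun ht => ih t ht)

theorem mem_labels_iff {L : Finset α} {T : FTree α} :
    L ∈ T.labels ↔ ∃ R, IsSubtree R T ∧ R.label = L := by
  induction T using FTree.induction with
  | node Y ts ih =>
    rw [mem_labels_node, exists_isSubtree_node_iff, label, eq_comm]
    exact or_congr Iff.rfl (exists_congr fun t => and_congr_right fun ht => ih t ht)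

theorem mem_support_iff {a : α} {T : FTree α} :
    a ∈ T.support ↔ ∃ R, IsSubtree R T ∧ a ∈ R.label := by
  induction T using FTree.induction with
  | node Y ts ih =>
    rw [mem_support_node, exists_isSubtree_node_iff, label]
    exact or_congr Iff.rfl (exists_congr fun t => and_congr_right fun ht => ih t ht)

theorem subtreeAtList_eq_some {X : Finset α} {ts : List (FTree α)} {R : FTree α}
    (h : subtreeAtList ts X = some R) : ∃ t ∈ ts, t.subtreeAt X = some R := by
  induction ts with
  | nil => simp [subtreeAtList] at h
  | cons t ts ih =>
    rw [subtreeAtList] at h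
    cases ht : t.subtreeAt X with
    | none =>
      rw [ht] at h
      obtain ⟨u, hu, hR⟩ := ih h
      exact ⟨u, List.mem_cons_of_mem _ hu, hR⟩
    | some R' => rw [ht] at h; exact ⟨t, List.mem_cons_self, ht.trans h⟩

theorem subtreeAtList_isSome {X : Finset α} {ts : List (FTree α)} {t : FTree α} (ht : t ∈ ts)
    (h : (t.subtreeAt X).isSome) : (subtreeAtList ts X).isSome := by
  induction ts with
  | nil => simp at ht
  | cons u ts ih =>
    rw [subtreeAtList]
    cases hu : u.subtreeAt X with
    | none =>
      obtain rfl | ht := List.mem_cons.1 ht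
      · simp [hu] at h
      · exact ih ht
    | some R => rfl

theorem subtreeAt_eq_some {X : Finset α} {T R : FTree α} (h : T.subtreeAt X = some R) :
    IsSubtree R T ∧ R.label = X := by
  induction T using FTree.induction generalizing R with
  | node Y ts ih =>
    rw [subtreeAt] at h
    split_ifs at h with hY
    · cases h; exact ⟨.refl _, hY⟩
    · obtain ⟨t, ht, htR⟩ := subtreeAtList_eq_some h
      obtain ⟨hR, hRX⟩ := ih t ht htR
      exact ⟨.child hR ht, hRX⟩

theorem subtreeAt_isSome {X : Finset α} {T : FTree α} (hX : X ∈ T.labels) :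
    (T.subtreeAt X).isSome := by
  induction T using FTree.induction with
  | node Y ts ih =>
    rw [subtreeAt]
    split_ifs with hY
    · rfl
    · obtain rfl | ⟨t, ht, hXt⟩ := mem_labels_node.1 hX
      · exact absurd rfl hY
      · exact subtreeAtList_isSome ht (ih t ht hXt)

theorem exists_suppAt_eq {X : Finset α} {T : FTree α} (hX : X ∈ T.labels) :
    ∃ R, IsSubtree R T ∧ R.label = X ∧ T.suppAt X = R.support := by
  obtain ⟨R, hR⟩ := Option.isSome_iff_exists.1 (subtreeAt_isSome hX)
  exact ⟨R, (subtreeAt_eq_some hR).1, (subtreeAt_eq_some hR).2, by simp [suppAt, hR]⟩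

end FTree

namespace IsConstruct

open FTree FinHypergraph

variable {α : Type*} [LinearOrder α] {G : FinHypergraph α} {Y : Finset α} {ts : List (FTree α)}
  {t : FTree α}

theorem label_nonempty {T : FTree α} (h : IsConstruct G T) : T.label.Nonempty := by
  cases h with
  | node Y ts hY => exact hY

theorem isComponent_child (h : IsConstruct G (FTree.node Y ts)) (ht : t ∈ ts) :
    (G.restrict (G.verts \ Y)).IsComponent t.support := by
  cases h with
  | node Y ts hY hYsub hmem => exact hmem t ht

theorem exists_child_support_eq (h : IsConstruct G (FTree.node Y ts)) {C : Finset α}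
    (hC : (G.restrict (G.verts \ Y)).IsComponent C) : ∃ t ∈ ts, t.support = C := by
  cases h with
  | node Y ts hY hYsub hmem hcover => exact hcover C hC

theorem child (h : IsConstruct G (FTree.node Y ts)) (ht : t ∈ ts) :
    IsConstruct (G.restrict t.support) t := by
  cases h with
  | node Y ts hY hYsub hmem hcover hsorted hchild => exact hchild t ht

theorem label_subset (h : IsConstruct G (FTree.node Y ts)) : Y ⊆ G.verts := by
  cases h with
  | node Y ts hY hYsub => exact hYsub

theorem child_support_subset (h : IsConstruct G (FTree.node Y ts)) (ht : t ∈ ts) :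
    t.support ⊆ G.verts \ Y :=
  (h.isComponent_child ht).1.trans Finset.inter_subset_left

theorem exists_mem_child_support (h : IsConstruct G (FTree.node Y ts)) {a : α}
    (ha : a ∈ G.verts \ Y) : ∃ t ∈ ts, a ∈ t.support := by
  obtain ⟨C, hC, haC⟩ := exists_isComponent (G := G.restrict (G.verts \ Y))
    (by rwa [restrict_verts_of_subset Finset.sdiff_subset])
  obtain ⟨t, ht, rfl⟩ := h.exists_child_support_eq hC
  exact ⟨t, ht, haC⟩

theorem pairwise_max_lt_children (h : IsConstruct G (FTree.node Y ts)) :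
    (ts.map support).Pairwise fun A B => A.max < B.max := by
  cases h with
  | node Y ts hY hYsub hmem hcover hsorted => exact List.pairwise_map.2 hsorted

theorem nodup_map_support_children (h : IsConstruct G (FTree.node Y ts)) :
    (ts.map support).Nodup :=
  h.pairwise_max_lt_children.imp fun hlt heq => hlt.ne (congrArg Finset.max heq)

theorem child_eq_of_mem_support (h : IsConstruct G (FTree.node Y ts)) {t₁ t₂ : FTree α}
    (ht₁ : t₁ ∈ ts) (ht₂ : t₂ ∈ ts) {a : α} (ha₁ : a ∈ t₁.support) (ha₂ : a ∈ t₂.support) :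
    t₁ = t₂ :=
  List.inj_on_of_nodup_map h.nodup_map_support_children ht₁ ht₂
    ((h.isComponent_child ht₁).eq_of_mem (h.isComponent_child ht₂) ha₁ ha₂)

theorem support_eq {T : FTree α} (h : IsConstruct G T) : T.support = G.verts := by
  obtain ⟨Y, ts⟩ := T
  ext a
  rw [mem_support_node]
  constructor
  · rintro (ha | ⟨t, ht, ha⟩)
    exacts [h.label_subset ha, (Finset.mem_sdiff.1 (h.child_support_subset ht ha)).1]
  · intro ha
    by_cases haY : a ∈ Y
    · exact Or.inl haY
    · exact Or.inr (h.exists_mem_child_support (Finset.mem_sdiff.2 ⟨ha, haY⟩))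

variable {T R R₁ R₂ : FTree α}

theorem isSubtree (h : IsConstruct G T) (hR : IsSubtree R T) :
    IsConstruct (G.restrict R.support) R := by
  induction hR generalizing G with
  | refl => rwa [h.support_eq, restrict_self]
  | @child t u hRt ht ih =>
    obtain ⟨Y, ts⟩ := u
    have := ih (h.child ht)
    rwa [restrict_restrict hRt.support_subset] at this

theorem support_subset_verts (h : IsConstruct G T) (hR : IsSubtree R T) : R.support ⊆ G.verts :=
  h.support_eq ▸ hR.support_subset

theorem isComponent_of_mem_children (h : IsConstruct G T) (hR : IsSubtree R T)
    (ht : t ∈ R.children) : (G.restrict (R.support \ R.label)).IsComponent t.support := by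
  obtain ⟨L, cs⟩ := R
  have := (h.isSubtree hR).isComponent_child ht
  rwa [restrict_verts_of_subset (h.support_subset_verts hR),
    restrict_restrict Finset.sdiff_subset] at this

theorem mem_nestSet_of_isComponent (h : IsConstruct G T) (hR : IsSubtree R T) {C : Finset α}
    (hC : (G.restrict (R.support \ R.label)).IsComponent C) : C ∈ T.nestSet := by
  obtain ⟨L, cs⟩ := R
  obtain ⟨c, hc, rfl⟩ := (h.isSubtree hR).exists_child_support_eq (C := C)
    (by rwa [restrict_verts_of_subset (h.support_subset_verts hR),
      restrict_restrict Finset.sdiff_subset])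
  exact mem_nestSet_iff.2 ⟨c, (IsSubtree.child (u := FTree.node L cs) (.refl c) hc).trans hR, rfl⟩

theorem support_subset_of_mem_label (h : IsConstruct G T) (hR₁ : IsSubtree R₁ T)
    (hR₂ : IsSubtree R₂ T) {a : α} (ha₁ : a ∈ R₁.label) (ha₂ : a ∈ R₂.support) :
    R₁.support ⊆ R₂.support := by
  induction h generalizing R₁ R₂ with
  | @node G Y ts hY hYsub hmem hcover hsorted hchild ih =>
    have h := IsConstruct.node Y ts hY hYsub hmem hcover hsorted hchild
    obtain rfl | ⟨t₂, ht₂, hR₂t⟩ := isSubtree_node_iff.1 hR₂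
    · exact hR₁.support_subset
    obtain rfl | ⟨t₁, ht₁, hR₁t⟩ := isSubtree_node_iff.1 hR₁
    · exact absurd ha₁ (Finset.mem_sdiff.1 (h.child_support_subset ht₂
        (hR₂t.support_subset ha₂))).2
    obtain rfl := h.child_eq_of_mem_support ht₁ ht₂
      (hR₁t.support_subset (label_subset_support _ ha₁)) (hR₂t.support_subset ha₂)
    exact ih t₁ ht₁ hR₁t hR₂t ha₁ ha₂

theorem eq_of_support_eq (h : IsConstruct G T) (hR₁ : IsSubtree R₁ T) (hR₂ : IsSubtree R₂ T)
    (hs : R₁.support = R₂.support) : R₁ = R₂ := by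
  induction h generalizing R₁ R₂ with
  | @node G Y ts hY hYsub hmem hcover hsorted hchild ih =>
    have h := IsConstruct.node Y ts hY hYsub hmem hcover hsorted hchild
    obtain ⟨y, hy⟩ := hY
    have hyR : ∀ {R t}, t ∈ ts → IsSubtree R t → y ∉ R.support := fun ht hRt hyR =>
      (Finset.mem_sdiff.1 (h.child_support_subset ht (hRt.support_subset hyR))).2 hy
    have hy₀ : y ∈ (FTree.node Y ts).support := label_subset_support _ hy
    obtain rfl | ⟨t₁, ht₁, hR₁t⟩ := isSubtree_node_iff.1 hR₁ <;>
      obtain rfl | ⟨t₂, ht₂, hR₂t⟩ := isSubtree_node_iff.1 hR₂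
    · rfl
    · exact absurd (hs ▸ hy₀) (hyR ht₂ hR₂t)
    · exact absurd (hs ▸ hy₀) (hyR ht₁ hR₁t)
    · obtain ⟨a, ha⟩ := ((h.child ht₁).isSubtree hR₁t).label_nonempty
      have ha₁ := label_subset_support _ ha
      obtain rfl := h.child_eq_of_mem_support ht₁ ht₂ (hR₁t.support_subset ha₁)
        (hR₂t.support_subset (hs ▸ ha₁))
      exact ih t₁ ht₁ hR₁t hR₂t hs

theorem eq_of_label_eq (h : IsConstruct G T) (hR₁ : IsSubtree R₁ T) (hR₂ : IsSubtree R₂ T)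
    (hl : R₁.label = R₂.label) : R₁ = R₂ := by
  obtain ⟨a, ha⟩ := (h.isSubtree hR₁).label_nonempty
  have ha₂ : a ∈ R₂.label := hl ▸ ha
  exact h.eq_of_support_eq hR₁ hR₂ (Finset.Subset.antisymm
    (h.support_subset_of_mem_label hR₁ hR₂ ha (label_subset_support _ ha₂))
    (h.support_subset_of_mem_label hR₂ hR₁ ha₂ (label_subset_support _ ha)))

theorem suppAt_label (h : IsConstruct G T) (hR : IsSubtree R T) :
    T.suppAt R.label = R.support := by
  obtain ⟨R', hR', hl, hsupp⟩ := exists_suppAt_eq (mem_labels_iff.2 ⟨R, hR, rfl⟩)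
  rw [hsupp, h.eq_of_label_eq hR' hR hl]

theorem connected_of_isSubtree (h : IsConstruct G T) (hG : G.Connected) (hR : IsSubtree R T) :
    (G.restrict R.support).Connected := by
  induction hR generalizing G with
  | refl => rwa [h.support_eq, restrict_self]
  | @child t u hRt ht ih =>
    obtain ⟨Y, ts⟩ := u
    have hc := (h.isComponent_child ht).2.1
    rw [restrict_restrict (h.child_support_subset ht)] at hc
    have := ih (h.child ht) hc
    rwa [restrict_restrict hRt.support_subset] at this

theorem mem_sat_of_mem_nestSet (h : IsConstruct G T) (hG : G.Connected) {A : Finset α}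
    (hA : A ∈ T.nestSet) : A ∈ G.sat := by
  obtain ⟨R, hR, rfl⟩ := mem_nestSet_iff.1 hA
  exact Finset.mem_filter.2 ⟨Finset.mem_powerset.2 (h.support_subset_verts hR),
    h.connected_of_isSubtree hG hR⟩

theorem mem_label_iff (h : IsConstruct G (FTree.node Y ts)) {a : α} :
    a ∈ Y ↔ a ∈ G.verts ∧ ∀ B ∈ (FTree.node Y ts).nestSet, a ∈ B → B = G.verts := by
  refine ⟨fun ha => ⟨h.label_subset ha, fun B hB haB => ?_⟩, fun ⟨ha, hB⟩ => ?_⟩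
  · obtain ⟨R, hR, rfl⟩ := mem_nestSet_iff.1 hB
    obtain rfl | ⟨t, ht, hRt⟩ := isSubtree_node_iff.1 hR
    · exact h.support_eq
    · exact absurd ha (Finset.mem_sdiff.1 (h.child_support_subset ht (hRt.support_subset haB))).2
  · by_contra haY
    obtain ⟨t, ht, hat⟩ := h.exists_mem_child_support (Finset.mem_sdiff.2 ⟨ha, haY⟩)
    have htV := hB _ (mem_nestSet_iff.2 ⟨t, .child (u := FTree.node Y ts) (.refl t) ht, rfl⟩) hat
    obtain ⟨y, hy⟩ := h.label_nonempty
    exact (Finset.mem_sdiff.1 (h.child_support_subset ht (htV ▸ h.label_subset hy))).2 hy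

theorem map_support_children_eq {ss : List (FTree α)} (hS : IsConstruct G (FTree.node Y ss))
    (hT : IsConstruct G (FTree.node Y ts)) : ss.map support = ts.map support := by
  have hmem : ∀ {ts : List (FTree α)}, IsConstruct G (FTree.node Y ts) → ∀ C,
      C ∈ ts.map support ↔ (G.restrict (G.verts \ Y)).IsComponent C := fun h C => by
    rw [List.mem_map]
    exact ⟨fun ⟨t, ht, hC⟩ => hC ▸ h.isComponent_child ht, h.exists_child_support_eq⟩
  refine List.Perm.eq_of_pairwise (fun A B _ _ hAB hBA => absurd (hAB.trans hBA) (lt_irrefl _))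
    hS.pairwise_max_lt_children hT.pairwise_max_lt_children ?_
  rw [List.perm_ext_iff_of_nodup hS.nodup_map_support_children hT.nodup_map_support_children]
  exact fun C => (hmem hS C).trans (hmem hT C).symm

theorem nestSet_child (h : IsConstruct G (FTree.node Y ts)) (ht : t ∈ ts) :
    t.nestSet = (FTree.node Y ts).nestSet.filter (· ⊆ t.support) := by
  ext A
  simp only [Finset.mem_filter, mem_nestSet_iff]
  constructor
  · rintro ⟨R, hR, rfl⟩
    exact ⟨⟨R, hR.trans (.child (u := FTree.node Y ts) (.refl t) ht), rfl⟩, hR.support_subset⟩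
  · rintro ⟨⟨R, hR, rfl⟩, hRt⟩
    obtain ⟨a, ha⟩ := (h.isSubtree hR).label_nonempty
    have haR := label_subset_support _ ha
    obtain rfl | ⟨t', ht', hRt'⟩ := isSubtree_node_iff.1 hR
    · exact absurd ha (Finset.mem_sdiff.1 (h.child_support_subset ht (hRt haR))).2
    · obtain rfl := h.child_eq_of_mem_support ht' ht (hRt'.support_subset haR) (hRt haR)
      exact ⟨R, hRt', rfl⟩

theorem eq_of_nestSet_eq {S : FTree α} (hS : IsConstruct G S) (hT : IsConstruct G T)
    (h : S.nestSet = T.nestSet) : S = T := by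
  induction hS generalizing T with
  | @node G Y ss hY hYsub hmem hcover hsorted hchild ih =>
    have hS := IsConstruct.node Y ss hY hYsub hmem hcover hsorted hchild
    obtain ⟨Z, ts⟩ := T
    obtain rfl : Y = Z := by ext a; rw [hS.mem_label_iff, hT.mem_label_iff, h]
    congr 1
    refine List.eq_of_map_eq (hS.map_support_children_eq hT) fun c hc d hd hcd => ?_
    refine ih c hc (hcd ▸ hT.child hd) ?_
    rw [hS.nestSet_child hc, hT.nestSet_child hd, h, hcd]

end IsConstruct

section Construction

open FTree

variable {α : Type*} [LinearOrder α] {G : FinHypergraph α} {T R : FTree α}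

theorem IsConstruct.isLeast_support (h : IsConstruct G T) (hR : IsSubtree R T) {a : α}
    (ha : a ∈ R.label) : IsLeast {B | B ∈ T.nestSet ∧ a ∈ B} R.support := by
  refine ⟨⟨mem_nestSet_iff.2 ⟨R, hR, rfl⟩, label_subset_support R ha⟩, ?_⟩
  rintro B ⟨hB, haB⟩
  obtain ⟨R', hR', rfl⟩ := mem_nestSet_iff.1 hB
  exact h.support_subset_of_mem_label hR hR' ha haB

theorem IsConstruction.exists_isSubtree_label_eq (h : IsConstruction G T) {w : α}
    (hw : w ∈ G.verts) : ∃ R, IsSubtree R T ∧ R.label = {w} := by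
  obtain ⟨R, hR, hwR⟩ := mem_support_iff.1 (h.1.support_eq ▸ hw)
  obtain ⟨a, ha⟩ := Finset.card_eq_one.1 (h.2 _ (mem_labels_iff.2 ⟨R, hR, rfl⟩))
  rw [ha, Finset.mem_singleton] at hwR
  exact ⟨R, hR, hwR ▸ ha⟩

theorem IsConstruction.isLeast_suppAt (h : IsConstruction G T) {w : α} (hw : w ∈ G.verts) :
    IsLeast {B | B ∈ T.nestSet ∧ w ∈ B} (T.suppAt {w}) := by
  obtain ⟨R, hR, hRw⟩ := h.exists_isSubtree_label_eq hw
  rw [← hRw, h.1.suppAt_label hR]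
  exact h.1.isLeast_support hR (hRw ▸ Finset.mem_singleton_self w)

theorem IsConstruction.suppAt_injOn (h : IsConstruction G T) {w w' : α} (hw : w ∈ G.verts)
    (hw' : w' ∈ G.verts) (heq : T.suppAt {w} = T.suppAt {w'}) : w = w' := by
  obtain ⟨R, hR, hRw⟩ := h.exists_isSubtree_label_eq hw
  obtain ⟨R', hR', hRw'⟩ := h.exists_isSubtree_label_eq hw'
  rw [← hRw, ← hRw', h.1.suppAt_label hR, h.1.suppAt_label hR'] at heq
  rw [← Finset.singleton_inj, ← hRw, ← hRw', h.1.eq_of_support_eq hR hR' heq]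

theorem coordVec_lt_coordVec {S : FTree α} {x : α} {K : Finset α} (hK : K ∈ G.sat) (hxK : x ∈ K)
    (hKS : K ⊆ S.suppAt {x}) (hKT : ¬K ⊆ T.suppAt {x}) (hTS : T.suppAt {x} ⊆ S.suppAt {x}) :
    coordVec G T x < coordVec G S x := by
  refine Finset.card_lt_card ((Finset.ssubset_iff_of_subset ?_).2 ⟨K, ?_, ?_⟩)
  · exact Finset.monotone_filter_right _ fun e _ he => ⟨he.1, he.2.trans hTS⟩
  · exact Finset.mem_filter.2 ⟨hK, hxK, hKS⟩
  · exact fun hK' => hKT (Finset.mem_filter.1 hK').2.2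

end Construction

theorem FTree.CoveredBy.exists_nestSet_eq_insert {α : Type*} [DecidableEq α] {S V : FTree α}
    (h : CoveredBy S V) : ∃ N ∉ V.nestSet, S.nestSet = insert N V.nestSet := by
  obtain ⟨N, hN, -, hV⟩ := h
  have hN' : N ∈ S.nestSet := List.mem_toFinset.2 hN
  exact ⟨N, hV ▸ Finset.notMem_erase N _, by rw [hV, Finset.insert_erase hN']⟩

theorem IsLeast.eq_of_insert {α : Type*} [DecidableEq α] {𝒱 : Finset (Finset α)}
    {N M A B : Finset α} {w : α} (hA : IsLeast {C | C ∈ insert N 𝒱 ∧ w ∈ C} A)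
    (hB : IsLeast {C | C ∈ insert M 𝒱 ∧ w ∈ C} B) (hAN : A ≠ N) (hBM : B ≠ M) : A = B := by
  have hA𝒱 := (Finset.mem_insert.1 hA.1.1).resolve_left hAN
  have hB𝒱 := (Finset.mem_insert.1 hB.1.1).resolve_left hBM
  exact le_antisymm (hA.2 ⟨Finset.mem_insert_of_mem hB𝒱, hB.1.2⟩)
    (hB.2 ⟨Finset.mem_insert_of_mem hA𝒱, hA.1.2⟩)

section Flip

open FTree

variable {α : Type*} [LinearOrder α] {H : FinHypergraph α} {S T V : FTree α}
  {𝒱 : Finset (Finset α)} {N M K : Finset α} {x y : α}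

theorem IsConstruct.suppAt_eq_of_parentChild (hS : IsConstruct H S)
    (hSV : S.nestSet = insert N 𝒱) (hKx : IsLeast {B | B ∈ 𝒱 ∧ x ∈ B} K)
    (hKy : IsLeast {B | B ∈ 𝒱 ∧ y ∈ B} K) (hxy : ParentChild {x} {y} S) :
    S.suppAt {x} = K ∧ S.suppAt {y} = N ∧ (H.restrict (K \ {x})).IsComponent N := by
  obtain ⟨R, hR, hRx, t, ht, hty⟩ := hxy
  have htS : IsSubtree t S := (IsSubtree.child (.refl t) ht).trans hR
  have hcomp := hS.isComponent_of_mem_children hR ht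
  have hxt : x ∉ t.support := fun hxt =>
    (Finset.mem_sdiff.1 (Finset.mem_inter.1 (hcomp.1 hxt)).1).2 (hRx ▸ Finset.mem_singleton_self x)
  have htN : t.support = N := by
    refine (Finset.mem_insert.1 (hSV ▸ mem_nestSet_iff.2 ⟨t, htS, rfl⟩)).resolve_right
      fun ht𝒱 => hxt (hKy.2 ⟨ht𝒱, ?_⟩ hKx.1.2)
    exact label_subset_support t (hty ▸ Finset.mem_singleton_self y)
  have hxR : x ∈ R.support := label_subset_support R (hRx ▸ Finset.mem_singleton_self x)
  have hRK : R.support = K := by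
    refine le_antisymm ((hS.isLeast_support hR (hRx ▸ Finset.mem_singleton_self x)).2
      ⟨hSV ▸ Finset.mem_insert_of_mem hKx.1.1, hKx.1.2⟩) (hKx.2 ⟨?_, hxR⟩)
    refine (Finset.mem_insert.1 (hSV ▸ mem_nestSet_iff.2 ⟨R, hR, rfl⟩)).resolve_left ?_
    rintro rfl
    exact hxt (htN ▸ hxR)
  refine ⟨by rw [← hRx, hS.suppAt_label hR, hRK], by rw [← hty, hS.suppAt_label htS, htN], ?_⟩
  rwa [← hRK, ← hRx, ← htN]

theorem IsConstruction.suppAt_eq_of_isComponent (hT : IsConstruction H T)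
    (hTV : T.nestSet = insert M 𝒱) (hKx : IsLeast {B | B ∈ 𝒱 ∧ x ∈ B} K) (hN : N ∉ 𝒱)
    (hNM : N ≠ M) (hNK : (H.restrict (K \ {x})).IsComponent N) (hx : x ∈ H.verts) :
    T.suppAt {x} = M := by
  obtain ⟨Q, hQ, hQx⟩ := hT.exists_isSubtree_label_eq hx
  have hσ := hT.isLeast_suppAt hx
  rw [← hQx, hT.1.suppAt_label hQ] at hσ ⊢
  -- otherwise the component `N` of `K \ {x}` would be a nest of `T` as well
  refine (Finset.mem_insert.1 (hTV ▸ hσ.1.1)).resolve_right fun hQ𝒱 => ?_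
  have hQK : Q.support = K :=
    le_antisymm (hσ.2 ⟨hTV ▸ Finset.mem_insert_of_mem hKx.1.1, hKx.1.2⟩) (hKx.2 ⟨hQ𝒱, hσ.1.2⟩)
  have hNT := hT.1.mem_nestSet_of_isComponent hQ (hQK ▸ hQx ▸ hNK)
  rcases Finset.mem_insert.1 (hTV ▸ hNT) with h | h
  exacts [hNM h, hN h]

theorem IsConstruction.notMem_suppAt (hT : IsConstruction H T)
    (hTV : T.nestSet = insert (T.suppAt {x}) 𝒱) (hKx : IsLeast {B | B ∈ 𝒱 ∧ x ∈ B} K)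
    (hKy : IsLeast {B | B ∈ 𝒱 ∧ y ∈ B} K) (hx : x ∈ H.verts) (hy : y ∈ H.verts) (hxy : x ≠ y) :
    y ∉ T.suppAt {x} := by
  intro hyx
  have hσ := hT.isLeast_suppAt hx
  have hτ := hT.isLeast_suppAt hy
  have hτσ : T.suppAt {y} ≠ T.suppAt {x} := fun h => hxy (hT.suppAt_injOn hy hx h).symm
  have hτ𝒱 := (Finset.mem_insert.1 (hTV ▸ hτ.1.1)).resolve_left hτσ
  exact hτσ (le_antisymm (hτ.2 ⟨hσ.1.1, hyx⟩) (hσ.2 ⟨hτ.1.1, hKy.2 ⟨hτ𝒱, hτ.1.2⟩ hKx.1.2⟩))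

theorem Flip.exists_coordVec_lt (hH : H.Connected) (h : Flip H S T) :
    ∃ x y, x < y ∧ x ∈ H.verts ∧ coordVec H T x < coordVec H S x ∧
      ∀ w ∈ H.verts, w ≠ x → w ≠ y → coordVec H T w = coordVec H S w := by
  obtain ⟨hS, hT, hST, V, x, y, hV, -, hxy, hxyV, hSV, hTV, hPC, hlt⟩ := h
  obtain ⟨N, hN, hSV⟩ := hSV.exists_nestSet_eq_insert
  obtain ⟨M, -, hTV⟩ := hTV.exists_nestSet_eq_insert
  obtain ⟨RV, hRV, hRVxy⟩ := mem_labels_iff.1 hxyV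
  have hKx := hV.isLeast_support hRV (hRVxy ▸ Finset.mem_insert_self x {y})
  have hKy := hV.isLeast_support hRV
    (hRVxy ▸ Finset.mem_insert_of_mem (Finset.mem_singleton_self y))
  have hx := hV.support_subset_verts hRV hKx.1.2
  have hy := hV.support_subset_verts hRV hKy.1.2
  obtain ⟨hSx, hSy, hNK⟩ := hS.1.suppAt_eq_of_parentChild hSV hKx hKy hPC
  have hNM : N ≠ M := fun h => hST (hS.1.eq_of_nestSet_eq hT.1 (by rw [hSV, hTV, h]))
  have hTx := hT.suppAt_eq_of_isComponent hTV hKx hN hNM hNK hx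
  have hyT := hT.notMem_suppAt (hTx ▸ hTV) hKx hKy hx hy hxy
  refine ⟨x, y, hlt, hx, ?_, fun w hw hwx hwy => ?_⟩
  · refine coordVec_lt_coordVec (hV.mem_sat_of_mem_nestSet hH hKx.1.1) hKx.1.2 hSx.ge
      (fun hK => hyT (hK hKy.1.2)) (hSx ▸ (hT.isLeast_suppAt hx).2 ⟨?_, hKx.1.2⟩)
    exact hTV ▸ Finset.mem_insert_of_mem hKx.1.1
  · have hSw : S.suppAt {w} ≠ N := hSy ▸ fun h => hwy (hS.suppAt_injOn hw hy h)
    have hTw : T.suppAt {w} ≠ M := hTx ▸ fun h => hwx (hT.suppAt_injOn hw hx h)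
    simp only [coordVec, IsLeast.eq_of_insert (hTV ▸ hT.isLeast_suppAt hw)
      (hSV ▸ hS.isLeast_suppAt hw) hTw hSw]

end Flip

section FlipOrder

variable {α : Type*} [LinearOrder α]

def coordLex (H : FinHypergraph α) (S : FTree α) : Lex (H.verts → ℕ) :=
  toLex fun w => coordVec H S w

theorem Flip.coordLex_lt {H : FinHypergraph α} (hH : H.Connected) {S T : FTree α}
    (h : Flip H S T) : coordLex H T < coordLex H S := by
  obtain ⟨x, y, hxy, hx, hlt, heq⟩ := h.exists_coordVec_lt hH
  exact ⟨⟨x, hx⟩, fun w (hw : (w : α) < x) => heq w w.2 hw.ne (hw.trans hxy).ne, hlt⟩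

end FlipOrder

/-- Proposition `p:flip-partial-order`.  For an ordered connected
hypergraph, the preorder generated by the flip relation is a partial order (its
reflexive–transitive closure is antisymmetric), and the flip relation is well-founded. -/
theorem stmt8 {α : Type*} [LinearOrder α] (H : FinHypergraph α) (hH : H.Connected) :
    (∀ S T : FTree α, Relation.ReflTransGen (Flip H) S T →
      Relation.ReflTransGen (Flip H) T S → S = T) ∧
    WellFounded (fun S T : FTree α => Flip H T S) := by
  have hlt : ∀ {S T}, Flip H S T → coordLex H T < coordLex H S := fun h => h.coordLex_lt hH
  have hle : ∀ {S T}, Relation.ReflTransGen (Flip H) S T → coordLex H T ≤ coordLex H S := by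
    intro S T h
    induction h with
    | refl => rfl
    | tail _ hUT ih => exact (hlt hUT).le.trans ih
  refine ⟨fun S T hST hTS => ?_, Subrelation.wf hlt (InvImage.wf _ wellFounded_lt)⟩
  rcases hST.cases_head with rfl | ⟨U, hSU, hUT⟩
  · rfl
  · exact absurd ((hle hUT).trans_lt (hlt hSU)) (hle hTS).not_gt

end
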